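/- The weak polarized null condition for the Einstein quadratic nonlinearity: for any symmetric 2-tensor T, the quadratic form Q_{αβ}(T,T) = g₀^{μρ}g₀^{νσ}∂_{(α}u₀ T_{ρσ} ∂_μ u₀ T_{β)ν} − (1/2)g₀^{μρ}g₀^{νσ}∂_α u₀ T_{ρσ} ∂_β u₀ T_{μν} − g₀^{μρ}g₀^{νσ}∂_ρ u₀ T_{αν} ∂_σ u₀ T_{βμ} + g₀^{μρ}g₀^{νσ}∂_ρ u₀ T_{σα} ∂_μ u₀ T_{νβ} satisfies the identity Q_{αβ}(T,T) = E(T,T) ∂_α u₀ ∂_β u₀ + g₀^{νσ} Pol_σ(T) ∂_{(α}u₀ T_{β)ν} − Pol_α(T) Pol_β(T), where E(T,S) = (1/4)(tr_{g₀}T)(tr_{g₀}S) − (1/2)|T·S|_{g₀}. In particular, if Pol(T) = 0 then Q_{αβ}(T,T) = E(T,T) ∂_α u₀ ∂_β u₀ is fully non-tangential (proportional to ∂_α u₀ ∂_β u₀). -/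
import Mathlib


noncomputable section

/-- `Pol_σ(T) = g₀^{μν}(∂_μu₀ T_{σν} − ½ ∂_σu₀ T_{μν})`, in coordinates at a point. -/
def polC (ginv : Fin 4 → Fin 4 → ℝ) (du : Fin 4 → ℝ) (T : Fin 4 → Fin 4 → ℝ)
    (σ : Fin 4) : ℝ :=
  ∑ μ, ∑ ν, ginv μ ν * (du μ * T σ ν - (1 / 2) * du σ * T μ ν)

/-- `tr_{g₀} T = g₀^{μν} T_{μν}`. -/
def trG (ginv : Fin 4 → Fin 4 → ℝ) (T : Fin 4 → Fin 4 → ℝ) : ℝ :=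
  ∑ μ, ∑ ν, ginv μ ν * T μ ν

/-- `|T·S|_{g₀} = g₀^{αβ}g₀^{μν} T_{αμ} S_{βν}`. -/
def dotG (ginv : Fin 4 → Fin 4 → ℝ) (T S : Fin 4 → Fin 4 → ℝ) : ℝ :=
  ∑ α, ∑ β, ∑ μ, ∑ ν, ginv α β * ginv μ ν * T α μ * S β ν

/-- The energy `E(T,S) = ¼ (tr T)(tr S) − ½ |T·S|`. -/
def energyE (ginv : Fin 4 → Fin 4 → ℝ) (T S : Fin 4 → Fin 4 → ℝ) : ℝ :=
  (1 / 4) * trG ginv T * trG ginv S - (1 / 2) * dotG ginv T S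

/-- The quadratic form `Q_{αβ}(T,T)` built from the Einstein quadratic nonlinearity,
with unnormalized symmetrization `X_{(α}Y_{β)} = X_αY_β + X_βY_α`. -/
def quadQ (ginv : Fin 4 → Fin 4 → ℝ) (du : Fin 4 → ℝ) (T : Fin 4 → Fin 4 → ℝ)
    (α β : Fin 4) : ℝ :=
  (∑ μ, ∑ ρ, ∑ ν, ∑ σ, ginv μ ρ * ginv ν σ *
      (du α * T ρ σ * du μ * T β ν + du β * T ρ σ * du μ * T α ν)) -
    (1 / 2) * (∑ μ, ∑ ρ, ∑ ν, ∑ σ, ginv μ ρ * ginv ν σ * du α * T ρ σ * du β * T μ ν) -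
    (∑ μ, ∑ ρ, ∑ ν, ∑ σ, ginv μ ρ * ginv ν σ * du ρ * T α ν * du σ * T β μ) +
    ∑ μ, ∑ ρ, ∑ ν, ∑ σ, ginv μ ρ * ginv ν σ * du ρ * T σ α * du μ * T ν β

set_option maxHeartbeats 4000000 in
/-- The weak polarized null condition for the Einstein quadratic nonlinearity:
`Q_{αβ}(T,T) = E(T,T) ∂_αu₀ ∂_βu₀ + g₀^{νσ}Pol_σ(T) ∂_{(α}u₀ T_{β)ν} − Pol_α(T)Pol_β(T)`;
in particular, if `Pol(T) = 0` then `Q_{αβ}(T,T)` is fully non-tangential. -/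
theorem stmt_12 (ginv : Fin 4 → Fin 4 → ℝ) (hsym : ∀ α β, ginv α β = ginv β α)
    (du : Fin 4 → ℝ) (heik : ∑ μ, ∑ ν, ginv μ ν * du μ * du ν = 0)
    (T : Fin 4 → Fin 4 → ℝ) (hT : ∀ α β, T α β = T β α) :
    (∀ α β, quadQ ginv du T α β =
        energyE ginv T T * du α * du β +
          (∑ ν, ∑ σ, ginv ν σ * polC ginv du T σ * (du α * T β ν + du β * T α ν)) -
          polC ginv du T α * polC ginv du T β) ∧
      ((∀ σ, polC ginv du T σ = 0) →
        ∀ α β, quadQ ginv du T α β = energyE ginv T T * du α * du β) := by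
  have main : ∀ α β, quadQ ginv du T α β =
      energyE ginv T T * du α * du β +
        (∑ ν, ∑ σ, ginv ν σ * polC ginv du T σ * (du α * T β ν + du β * T α ν)) -
        polC ginv du T α * polC ginv du T β := by
    intro α β
    have heik' := heik
    simp only [quadQ, energyE, trG, dotG, polC, Fin.sum_univ_four] at heik' ⊢
    rw [hsym 1 0, hsym 2 0, hsym 3 0, hsym 2 1, hsym 3 1, hsym 3 2] at heik' ⊢
    rw [hT 1 0, hT 2 0, hT 3 0, hT 2 1, hT 3 1, hT 3 2]
    linear_combination (ginv 0 0 * T 0 α * T 0 β +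
      ginv 0 1 * T 1 α * T 0 β +
      ginv 0 2 * T 2 α * T 0 β +
      ginv 0 3 * T 3 α * T 0 β +
      ginv 0 1 * T 0 α * T 1 β +
      ginv 1 1 * T 1 α * T 1 β +
      ginv 1 2 * T 2 α * T 1 β +
      ginv 1 3 * T 3 α * T 1 β +
      ginv 0 2 * T 0 α * T 2 β +
      ginv 1 2 * T 1 α * T 2 β +
      ginv 2 2 * T 2 α * T 2 β +
      ginv 2 3 * T 3 α * T 2 β +
      ginv 0 3 * T 0 α * T 3 β +
      ginv 1 3 * T 1 α * T 3 β +
      ginv 2 3 * T 2 α * T 3 β +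
      ginv 3 3 * T 3 α * T 3 β) * heik'
  refine ⟨main, fun hpol α β => ?_⟩
  rw [main α β, hpol α, hpol β]
  simp [hpol]
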